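/- arXiv:2109.00569 — 4 statements merged into one kernel-verified Lean document; each statement's English description precedes it below -/
import Mathlib

section
/- Let $K$ be an ordered field equipped with a valuation $v$ whose valuation ring is convex. If $X \subseteq K$ is a convex set (with respect to the order) such that every open ball contained in $X$ has nonnegative valuative radius, then $X$ is contained in a single closed ball of radius $0$, i.e., there is $x_0$ with $X \subseteq \{x : v(x - x_0) \geq 0\}$. In particular, for all $x_1, x_2 \in X$, $v(x_1 - x_2) \geq 0$. -/
/-!
If `v (b - a) < 0` for some `a < b` in `X`, then the open ball of radius `v (b - a)` around the
midpoint `m` of `[a, b]` lies inside `[a, b] ⊆ X`: convexity of the valuation ring makes `v`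
antitone on positive elements, so `v (x - m) > v (b - a) ≥ v ((b - a) / 2)` forces
`|x - m| < (b - a) / 2`. This contradicts the hypothesis on balls in `X`.
-/

/-- The open ball `B_{>γ}(a) = {x : v(x-a) > γ}` in a valued field. -/
def oball {K : Type*} [Field K] {Γ : Type*} [AddCommGroup Γ] [LinearOrder Γ] [IsOrderedAddMonoid Γ]
    (v : AddValuation K (WithTop Γ)) (γ : Γ) (a : K) : Set K :=
  {x | (γ : WithTop Γ) < v (x - a)}

section ConvexValuationRing

variable {K : Type*} [Field K] [LinearOrder K] [IsStrictOrderedRing K]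
  {Γ₀ : Type*} [LinearOrderedAddCommMonoidWithTop Γ₀] {v : AddValuation K Γ₀}

theorem AddValuation.map_le_map_of_pos_of_le (hO : ∀ x : K, 0 ≤ x → x ≤ 1 → 0 ≤ v x)
    {u w : K} (hu : 0 < u) (huw : u ≤ w) : v w ≤ v u := by
  have hw : 0 < w := hu.trans_le huw
  have hquot : 0 ≤ v (u / w) := hO _ (by positivity) ((div_le_one hw).2 huw)
  calc v w = 0 + v w := (zero_add _).symm
    _ ≤ v (u / w) + v w := add_le_add_left hquot _
    _ = v u := by rw [← v.map_mul, div_mul_cancel₀ u hw.ne']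

theorem AddValuation.abs_lt_of_map_lt (hO : ∀ x : K, 0 ≤ x → x ≤ 1 → 0 ≤ v x)
    {r y : K} (hr : 0 < r) (h : v r < v y) : |y| < r := by
  by_contra! hle
  have hy : v |y| = v y := by
    rcases abs_choice y with hy | hy <;> rw [hy]
    exact v.map_neg y
  exact (v.map_le_map_of_pos_of_le hO hr hle).not_gt (hy ▸ h)

end ConvexValuationRing

theorem AddValuation.zero_le_map_two {R Γ₀ : Type*} [Ring R] [LinearOrderedAddCommMonoidWithTop Γ₀]
    (v : AddValuation R Γ₀) : 0 ≤ v 2 := by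
  rw [← one_add_one_eq_two]
  exact v.map_le_add v.map_one.ge v.map_one.ge

theorem oball_midpoint_subset_Ioo {K : Type*} [Field K] [LinearOrder K] [IsStrictOrderedRing K]
    {Γ : Type*} [AddCommGroup Γ] [LinearOrder Γ] [IsOrderedAddMonoid Γ]
    {v : AddValuation K (WithTop Γ)} (hO : ∀ x : K, 0 ≤ x → x ≤ 1 → 0 ≤ v x)
    {a b : K} (hab : a < b) {γ : Γ} (hγ : v (b - a) ≤ γ) :
    oball v γ ((a + b) / 2) ⊆ Set.Ioo a b := by
  intro x hx
  have hr : 0 < (b - a) / 2 := by linarith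
  have hhalf : v ((b - a) / 2) ≤ v (b - a) :=
    calc v ((b - a) / 2) ≤ v ((b - a) / 2) + v 2 := le_add_of_nonneg_right v.zero_le_map_two
      _ = v (b - a) := by rw [← v.map_mul, div_mul_cancel₀ _ two_ne_zero]
  obtain ⟨hleft, hright⟩ := abs_lt.1 (v.abs_lt_of_map_lt hO hr (hhalf.trans_lt (hγ.trans_lt hx)))
  constructor <;> linarith

/-- Let `K` be an ordered field with a valuation whose valuation ring is convex.
If `X ⊆ K` is convex and every open ball contained in `X` has nonnegative
radius, then `X` is contained in a single closed ball of radius `0`; in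
particular all differences of elements of `X` have nonnegative valuation. -/
theorem convex_set_in_closed_zero_ball {K : Type*} [Field K] [LinearOrder K] [IsStrictOrderedRing K] {Γ : Type*}
    [AddCommGroup Γ] [LinearOrder Γ] [IsOrderedAddMonoid Γ] (v : AddValuation K (WithTop Γ))
    (hconv : ∀ a b x : K, (0 : WithTop Γ) ≤ v a → (0 : WithTop Γ) ≤ v b →
      a ≤ x → x ≤ b → (0 : WithTop Γ) ≤ v x)
    (X : Set K)
    (hX : ∀ a ∈ X, ∀ b ∈ X, ∀ x : K, a ≤ x → x ≤ b → x ∈ X)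
    (hballs : ∀ (γ : Γ) (a : K), oball v γ a ⊆ X → 0 ≤ γ) :
    (∃ x₀ : K, X ⊆ {x | (0 : WithTop Γ) ≤ v (x - x₀)}) ∧
    ∀ x₁ ∈ X, ∀ x₂ ∈ X, (0 : WithTop Γ) ≤ v (x₁ - x₂) := by
  have hO : ∀ x : K, 0 ≤ x → x ≤ 1 → (0 : WithTop Γ) ≤ v x := fun x h₀ h₁ =>
    hconv 0 1 x (by simp) v.map_one.ge h₀ h₁
  have hlt : ∀ a ∈ X, ∀ b ∈ X, a < b → (0 : WithTop Γ) ≤ v (b - a) := by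
    intro a ha b hb hab
    cases hγ : v (b - a) with
    | top => exact le_top
    | coe γ =>
      have hsub : oball v γ ((a + b) / 2) ⊆ X := fun x hx =>
        have hx' := oball_midpoint_subset_Ioo hO hab hγ.le hx
        hX a ha b hb x hx'.1.le hx'.2.le
      exact WithTop.coe_nonneg.2 (hballs γ _ hsub)
  have hall : ∀ x₁ ∈ X, ∀ x₂ ∈ X, (0 : WithTop Γ) ≤ v (x₁ - x₂) := by
    intro x₁ h₁ x₂ h₂
    rcases lt_trichotomy x₂ x₁ with h | rfl | h
    · exact hlt x₂ h₂ x₁ h₁ h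
    · simp
    · exact v.map_sub_swap x₁ x₂ ▸ hlt x₁ h₁ x₂ h₂ h
  refine ⟨?_, hall⟩
  rcases X.eq_empty_or_nonempty with rfl | ⟨x₀, hx₀⟩
  · exact ⟨0, Set.empty_subset _⟩
  · exact ⟨x₀, fun x hx => hall x hx x₀ hx₀⟩
end

section
/- Let $x, y, a \in \mathbb{Q}_p$ and let $n > 1$ be a natural number. If $v(y - x) > 2v(n) + v(y - a)$ (where $v$ denotes the $p$-adic valuation), then $x - a$ and $y - a$ lie in the same coset of the group of nonzero $n$-th powers; that is, there exists $z \in \mathbb{Q}_p^\times$ with $x - a = z^n (y - a)$. -/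
/-- Hensel–Macpherson: in `ℚ_p`, if `v(y - x) > 2 v(n) + v(y - a)` then `x - a`
and `y - a` lie in the same coset of the group `P_n` of nonzero `n`-th powers. -/
theorem same_Pn_coset_of_val {p : ℕ} [Fact p.Prime] (x y a : ℚ_[p]) (n : ℕ) (hn : 1 < n)
    (h : Padic.addValuation (y - x) >
      2 • Padic.addValuation (n : ℚ_[p]) + Padic.addValuation (y - a)) :
    ∃ z : ℚ_[p], z ≠ 0 ∧ x - a = z ^ n * (y - a) := by
  have hp1 : (1 : ℝ) < p := by exact_mod_cast (Fact.out : p.Prime).one_lt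
  have hn0 : (n : ℚ_[p]) ≠ 0 := Nat.cast_ne_zero.mpr (by omega)
  have hya : y - a ≠ 0 := by
    intro h0
    rw [h0, AddValuation.map_zero, add_top] at h
    exact not_top_lt h
  by_cases hxy : y - x = 0
  · refine ⟨1, one_ne_zero, ?_⟩
    have : x = y := by linear_combination -hxy
    rw [this]; ring
  · -- translate the valuation hypothesis to integers
    rw [Padic.addValuation.apply hxy, Padic.addValuation.apply hn0,
      Padic.addValuation.apply hya, two_smul] at h
    have hint : (y - x).valuation > (n : ℚ_[p]).valuation + (n : ℚ_[p]).valuation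
        + (y - a).valuation := by exact_mod_cast h
    set A := (y - x).valuation
    set B := (n : ℚ_[p]).valuation
    set C := (y - a).valuation
    -- norm inequality
    have hxys : x - y ≠ 0 := fun h0 => hxy (by linear_combination -h0)
    have hnormxy : ‖x - y‖ = (p : ℝ) ^ (-A) := by
      rw [show x - y = -(y - x) by ring, norm_neg, Padic.norm_eq_zpow_neg_valuation hxy]
    have hnormn : ‖(n : ℚ_[p])‖ = (p : ℝ) ^ (-B) := Padic.norm_eq_zpow_neg_valuation hn0
    have hnormya : ‖y - a‖ = (p : ℝ) ^ (-C) := Padic.norm_eq_zpow_neg_valuation hya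
    have hkey : ‖x - y‖ < ‖(n : ℚ_[p])‖ ^ 2 * ‖y - a‖ := by
      rw [hnormxy, hnormn, hnormya, ← zpow_natCast ((p:ℝ) ^ (-B)), ← zpow_mul,
        ← zpow_add₀ (by positivity : (p:ℝ) ≠ 0)]
      exact zpow_lt_zpow_right₀ hp1 (by push_cast; omega)
    set u : ℚ_[p] := (x - y) / (y - a) with hu_def
    have hya_pos : 0 < ‖y - a‖ := norm_pos_iff.mpr hya
    have hu_lt : ‖u‖ < ‖(n : ℚ_[p])‖ ^ 2 := by
      rw [hu_def, norm_div, div_lt_iff₀ hya_pos]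
      exact hkey
    have hn_le : ‖(n : ℚ_[p])‖ ≤ 1 := by
      have := Padic.norm_int_le_one (p := p) (n : ℤ)
      simpa using this
    have hu_lt1 : ‖u‖ < 1 := lt_of_lt_of_le hu_lt (pow_le_one₀ (norm_nonneg _) hn_le)
    set u' : ℤ_[p] := ⟨u, le_of_lt hu_lt1⟩ with hu'_def
    set F : Polynomial ℤ_[p] := Polynomial.X ^ n - Polynomial.C (1 + u') with hF_def
    have heval : F.eval 1 = -u' := by simp [hF_def]
    have hderiv : F.derivative.eval 1 = (n : ℤ_[p]) := by
      simp [hF_def, Polynomial.derivative_X_pow]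
    have hnorm : ‖F.eval 1‖ < ‖F.derivative.eval 1‖ ^ 2 := by
      rw [heval, hderiv, norm_neg]
      have h1 : ‖u'‖ = ‖u‖ := rfl
      have h2 : ‖(n : ℤ_[p])‖ = ‖(n : ℚ_[p])‖ := by
        rw [PadicInt.norm_def]; norm_cast
      rw [h1, h2]
      exact hu_lt
    obtain ⟨z, hz, -⟩ := hensels_lemma hnorm
    have hzn : (z : ℚ_[p]) ^ n = 1 + u := by
      have : z ^ n = 1 + u' := by
        have := hz
        rw [hF_def] at this
        simp at this
        linear_combination this
      calc (z : ℚ_[p]) ^ n = ((z ^ n : ℤ_[p]) : ℚ_[p]) := by push_cast; ring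
        _ = ((1 + u' : ℤ_[p]) : ℚ_[p]) := by rw [this]
        _ = 1 + u := by push_cast; rfl
    have hz0 : (z : ℚ_[p]) ≠ 0 := by
      intro h0
      have : (0 : ℚ_[p]) = 1 + u := by rw [← hzn, h0, zero_pow (by omega)]
      have hu1 : u = -1 := by linear_combination -this
      rw [hu1] at hu_lt1
      simp at hu_lt1
    refine ⟨z, hz0, ?_⟩
    rw [hzn, add_mul, one_mul]
    have : u * (y - a) = x - y := div_mul_cancel₀ _ hya
    rw [this]; ring
end

section
/- Let $n > 1$ and let $X = \{x \in \mathbb{Q}_p : \gamma_1 < v(x) < \gamma_2 \text{ and } \lambda x \in P_n\}$ where $\lambda \in \mathbb{Q}_p^\times$, $\gamma_1 < \gamma_2$ in $\mathbb{Z} \cup \{\pm\infty\}$, and $P_n$ is the set of nonzero $n$-th powers. If $y_0 \in X$ satisfies $v(y_0) + 2v(n) < -2$, then the closed ball $\{x : v(x - y_0) \geq -1\}$ is contained in $X$. -/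
/-!
Hensel's lemma for `X ^ n - u` at `1` makes every `u` with `‖u - 1‖ < ‖n‖ ^ 2` an `n`-th power.
Applied to `u = x / y₀`, it puts `x` in the coset `y₀ • P_n` as soon as
`v(x - y₀) > v(y₀) + 2 v(n)`; since `v(n) ≥ 0` this also gives `v(x - y₀) > v(y₀)`, hence
`v(x) = v(y₀)`. On the ball `v(x - y₀) ≥ -1 > -2 > v(y₀) + 2 v(n)`, so both conditions defining
`X` pass from `y₀` to `x`.
-/

namespace PadicInt

variable {p : ℕ} [Fact p.Prime]

open Polynomial in
theorem exists_pow_eq_of_norm_sub_one_lt {n : ℕ} {u : ℤ_[p]}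
    (h : ‖u - 1‖ < ‖(n : ℤ_[p])‖ ^ 2) : ∃ w : ℤ_[p], w ^ n = u := by
  have hF : ‖(X ^ n - C u).aeval (1 : ℤ_[p])‖ <
      ‖(X ^ n - C u).derivative.aeval (1 : ℤ_[p])‖ ^ 2 := by
    simpa [norm_sub_rev, derivative_X_pow] using h
  obtain ⟨w, hw, -⟩ := hensels_lemma hF
  exact ⟨w, by simpa [sub_eq_zero] using hw⟩

end PadicInt

namespace Padic

variable {p : ℕ} [Fact p.Prime]

theorem addValuation_le_addValuation_iff {x y : ℚ_[p]} :
    addValuation x ≤ addValuation y ↔ ‖y‖ ≤ ‖x‖ := by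
  rcases eq_or_ne x 0 with rfl | hx
  · simp
  rcases eq_or_ne y 0 with rfl | hy
  · simp
  have hp : (1 : ℝ) < p := by exact_mod_cast (Fact.out : p.Prime).one_lt
  rw [addValuation.apply hx, addValuation.apply hy, WithTop.coe_le_coe,
    norm_eq_zpow_neg_valuation hx, norm_eq_zpow_neg_valuation hy,
    zpow_le_zpow_iff_right₀ hp, neg_le_neg_iff]

theorem addValuation_lt_addValuation_iff {x y : ℚ_[p]} :
    addValuation x < addValuation y ↔ ‖y‖ < ‖x‖ := by
  simpa only [not_le] using addValuation_le_addValuation_iff.not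

theorem addValuation_natCast_nonneg (n : ℕ) : 0 ≤ addValuation (n : ℚ_[p]) := by
  rw [← _root_.AddValuation.map_one (addValuation (p := p)), addValuation_le_addValuation_iff,
    norm_one]
  exact_mod_cast norm_int_le_one (p := p) n

theorem exists_pow_eq_of_norm_sub_one_lt {n : ℕ} {u : ℚ_[p]}
    (h : ‖u - 1‖ < ‖(n : ℚ_[p])‖ ^ 2) : ∃ w : ℚ_[p], w ≠ 0 ∧ w ^ n = u := by
  have hn : ‖(n : ℚ_[p])‖ ≤ 1 := by exact_mod_cast norm_int_le_one (p := p) n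
  have hu_sub : ‖u - 1‖ < 1 := h.trans_le (pow_le_one₀ (norm_nonneg _) hn)
  have hu : ‖u‖ ≤ 1 := by
    simpa using (nonarchimedean (u - 1) 1).trans (max_le hu_sub.le norm_one.le)
  obtain ⟨w, hw⟩ := PadicInt.exists_pow_eq_of_norm_sub_one_lt (u := ⟨u, hu⟩) h
  have hwu : (w : ℚ_[p]) ^ n = u := by rw [← PadicInt.coe_pow, hw]
  refine ⟨w, ?_, hwu⟩
  intro hw0
  have hn0 : n ≠ 0 := by
    rintro rfl
    exact (norm_nonneg _).not_gt (by simpa using h)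
  rw [hw0, zero_pow hn0] at hwu
  simp [← hwu] at hu_sub

theorem exists_eq_mul_pow_of_lt_addValuation_sub {n : ℕ} {x y : ℚ_[p]}
    (h : addValuation y + 2 • addValuation (n : ℚ_[p]) < addValuation (x - y)) :
    ∃ w : ℚ_[p], w ≠ 0 ∧ x = y * w ^ n := by
  rw [← _root_.AddValuation.map_pow, ← _root_.AddValuation.map_mul,
    addValuation_lt_addValuation_iff, norm_mul, norm_pow] at h
  have hy : y ≠ 0 := by
    rintro rfl
    exact (norm_nonneg _).not_gt (by simpa using h)
  obtain ⟨w, hw, hwu⟩ := exists_pow_eq_of_norm_sub_one_lt (u := x / y) (by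
    rwa [← div_self hy, ← sub_div, norm_div, div_lt_iff₀' (norm_pos_iff.mpr hy)])
  exact ⟨w, hw, by rw [hwu, mul_div_cancel₀ _ hy]⟩

end Padic

theorem closed_ball_in_Pn_cell_general {p : ℕ} [Fact p.Prime] (n : ℕ)
    (lam : ℚ_[p]) (γ₁ γ₂ : WithBot (WithTop ℤ))
    (X : Set ℚ_[p])
    (hX : X = {x : ℚ_[p] | γ₁ < (Padic.addValuation x : WithBot (WithTop ℤ)) ∧
      (Padic.addValuation x : WithBot (WithTop ℤ)) < γ₂ ∧
      ∃ z : ℚ_[p], z ≠ 0 ∧ lam * x = z ^ n})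
    (y₀ : ℚ_[p]) (hy₀ : y₀ ∈ X)
    (hval : Padic.addValuation y₀ + 2 • Padic.addValuation (n : ℚ_[p]) <
      ((-2 : ℤ) : WithTop ℤ)) :
    {x : ℚ_[p] | ((-1 : ℤ) : WithTop ℤ) ≤ Padic.addValuation (x - y₀)} ⊆ X := by
  subst hX
  obtain ⟨hγ₁, hγ₂, z, hz, hzy⟩ := hy₀
  intro x hx
  have hx_close : Padic.addValuation y₀ + 2 • Padic.addValuation (n : ℚ_[p]) <
      Padic.addValuation (x - y₀) :=
    hval.trans_le (le_trans (WithTop.coe_le_coe.mpr (by norm_num)) hx)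
  have hv : Padic.addValuation x = Padic.addValuation y₀ :=
    AddValuation.map_eq_of_lt_sub _ <| hx_close.trans_le' <|
      le_add_of_nonneg_right (nsmul_nonneg (Padic.addValuation_natCast_nonneg n) 2)
  obtain ⟨w, hw, rfl⟩ := Padic.exists_eq_mul_pow_of_lt_addValuation_sub hx_close
  exact ⟨hv ▸ hγ₁, hv ▸ hγ₂, z * w, mul_ne_zero hz hw,
    by rw [← mul_assoc, hzy, mul_pow]⟩

/-- If `X = {x ∈ ℚ_p : γ₁ < v(x) < γ₂ ∧ λx ∈ P_n}` and `y₀ ∈ X` satisfies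
`v(y₀) + 2v(n) < -2`, then the closed ball `{x : v(x - y₀) ≥ -1}` is contained
in `X`. -/
theorem closed_ball_in_Pn_cell {p : ℕ} [Fact p.Prime] (n : ℕ) (hn : 1 < n)
    (lam : ℚ_[p]) (hlam : lam ≠ 0) (γ₁ γ₂ : WithBot (WithTop ℤ)) (hγ : γ₁ < γ₂)
    (X : Set ℚ_[p])
    (hX : X = {x : ℚ_[p] | γ₁ < (Padic.addValuation x : WithBot (WithTop ℤ)) ∧
      (Padic.addValuation x : WithBot (WithTop ℤ)) < γ₂ ∧
      ∃ z : ℚ_[p], z ≠ 0 ∧ lam * x = z ^ n})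
    (y₀ : ℚ_[p]) (hy₀ : y₀ ∈ X)
    (hval : Padic.addValuation y₀ + 2 • Padic.addValuation (n : ℚ_[p]) <
      ((-2 : ℤ) : WithTop ℤ)) :
    {x : ℚ_[p] | ((-1 : ℤ) : WithTop ℤ) ≤ Padic.addValuation (x - y₀)} ⊆ X :=
  closed_ball_in_Pn_cell_general n lam γ₁ γ₂ X hX y₀ hy₀ hval
end

section
/- Let $(K,v)$ be a valued field with dense value group $\Gamma$ (for every $\alpha < \beta$ in $\Gamma$ there is $\gamma$ with $\alpha < \gamma < \beta$). Let $X = b \setminus \bigcup_{i=1}^s b_i$ be a Swiss cheese (a ball minus finitely many balls). If $X$ intersects infinitely many distinct closed balls of radius $0$, then $X$ contains a closed ball of strictly negative radius. -/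
/-- The closed ball `B_{≥γ}(a) = {x : v(x-a) ≥ γ}` in a valued field. -/
def cball {K : Type*} [Field K] {Γ : Type*} [AddCommGroup Γ] [LinearOrder Γ] [IsOrderedAddMonoid Γ]
    (v : AddValuation K (WithTop Γ)) (γ : Γ) (a : K) : Set K :=
  {x | (γ : WithTop Γ) ≤ v (x - a)}

/-- A ball is an open or a closed ball. -/
def IsBall {K : Type*} [Field K] {Γ : Type*} [AddCommGroup Γ] [LinearOrder Γ] [IsOrderedAddMonoid Γ]
    (v : AddValuation K (WithTop Γ)) (B : Set K) : Prop :=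
  ∃ γ a, B = oball v γ a ∨ B = cball v γ a

/-!
Only finitely many radius-`0` balls contain a centre of one of the removed balls `bᵢ`, so `X`
meets two distinct radius-`0` balls `S₁ ∋ c`, `S₂ ∋ d` avoiding all those centres `eᵢ`. Then
`v (d - c)` and all `v (eᵢ - c)` are negative, and by density there is `γ < 0` above all of them.
The ball `b` contains `c` and `d`, hence the closed ball of radius `v (d - c)` around `c`, which
contains `cball v γ c`; and a point `x` with `v (x - c) ≥ γ > v (eᵢ - c)` is as far from `eᵢ`
as `c` is, so it lies outside `bᵢ` just as `c` does.
-/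

theorem Set.Finite.exists_coe_lt_of_forall_lt {α Γ : Type*} [LinearOrder Γ] [DenselyOrdered Γ]
    {T : Set α} (hT : T.Finite) (hne : T.Nonempty) (f : α → WithTop Γ) {b : Γ}
    (h : ∀ p ∈ T, f p < b) : ∃ γ : Γ, γ < b ∧ ∀ p ∈ T, f p < γ := by
  obtain ⟨p₀, hp₀, hmax⟩ := T.exists_max_image f hT hne
  have hlt := h p₀ hp₀
  obtain ⟨m, hm⟩ := WithTop.ne_top_iff_exists.mp hlt.ne_top
  rw [← hm] at hlt hmax
  obtain ⟨γ, hmγ, hγb⟩ := _root_.exists_between (WithTop.coe_lt_coe.mp hlt)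
  exact ⟨γ, hγb, fun p hp => (hmax p hp).trans_lt (WithTop.coe_lt_coe.mpr hmγ)⟩

section Balls

variable {K Γ : Type*} [Field K] [AddCommGroup Γ] [LinearOrder Γ] [IsOrderedAddMonoid Γ]
  (v : AddValuation K (WithTop Γ)) {γ β : Γ} {a c d e x : K}

theorem oball_eq_of_mem (h : c ∈ oball v γ a) : oball v γ c = oball v γ a := by
  have h' : (γ : WithTop Γ) < v (a - c) := v.map_sub_swap c a ▸ h
  ext y
  constructor <;> intro hy
  · show (γ : WithTop Γ) < v (y - a)
    simpa only [sub_add_sub_cancel] using v.map_lt_add hy h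
  · show (γ : WithTop Γ) < v (y - c)
    simpa only [sub_add_sub_cancel] using v.map_lt_add hy h'

theorem cball_eq_of_mem (h : c ∈ cball v γ a) : cball v γ c = cball v γ a := by
  have h' : (γ : WithTop Γ) ≤ v (a - c) := v.map_sub_swap c a ▸ h
  ext y
  constructor <;> intro hy
  · show (γ : WithTop Γ) ≤ v (y - a)
    simpa only [sub_add_sub_cancel] using v.map_le_add hy h
  · show (γ : WithTop Γ) ≤ v (y - c)
    simpa only [sub_add_sub_cancel] using v.map_le_add hy h'

theorem cball_subset_oball (h : β < γ) : cball v γ c ⊆ oball v β c :=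
  fun _ hx => (WithTop.coe_lt_coe.mpr h).trans_le hx

theorem cball_subset_cball (h : β ≤ γ) : cball v γ c ⊆ cball v β c :=
  fun _ hx => (WithTop.coe_le_coe.mpr h).trans hx

theorem IsBall.cball_subset_of_mem {B : Set K} (hB : IsBall v B) (hc : c ∈ B) (hd : d ∈ B)
    (hγ : v (d - c) ≤ γ) : cball v γ c ⊆ B := by
  obtain ⟨β, a, rfl | rfl⟩ := hB
  · rw [← oball_eq_of_mem v hc] at hd ⊢
    exact cball_subset_oball v (WithTop.coe_lt_coe.mp (hd.trans_le hγ))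
  · rw [← cball_eq_of_mem v hc] at hd ⊢
    exact cball_subset_cball v (WithTop.coe_le_coe.mp (hd.trans hγ))

theorem val_sub_eq_of_val_sub_lt (h : v (e - c) < v (x - c)) : v (x - e) = v (c - e) := by
  rw [← sub_add_sub_cancel x c e, v.map_add_eq_of_lt_right (v.map_sub_swap e c ▸ h)]

theorem notMem_ball_of_val_sub_lt {B : Set K} {ρ : Γ} (hB : B = oball v ρ e ∨ B = cball v ρ e)
    (hc : c ∉ B) (h : v (e - c) < v (x - c)) : x ∉ B := by
  rcases hB with rfl | rfl <;>
    simpa only [oball, cball, Set.mem_ofPred_eq, val_sub_eq_of_val_sub_lt v h] using hc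

theorem cball_subset_sdiff_iUnion {ι : Type*} {b : Set K} (hb : IsBall v b) {bi : ι → Set K}
    {ρ : ι → Γ} {e : ι → K} (he : ∀ i, bi i = oball v (ρ i) (e i) ∨ bi i = cball v (ρ i) (e i))
    (hc : c ∈ b \ ⋃ i, bi i) (hd : d ∈ b) (hdγ : v (d - c) ≤ γ) (heγ : ∀ i, v (e i - c) < γ) :
    cball v γ c ⊆ b \ ⋃ i, bi i := by
  intro x hx
  refine ⟨hb.cball_subset_of_mem v hc.1 hd hdγ hx, Set.mem_iUnion.not.mpr fun ⟨i, hxi⟩ => ?_⟩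
  exact notMem_ball_of_val_sub_lt v (he i) (fun hci => hc.2 (Set.mem_iUnion_of_mem i hci))
    ((heγ i).trans_le hx) hxi

end Balls

/-- In a valued field with dense value group, if a Swiss cheese
`X = b \ ⋃ i, b i` intersects infinitely many distinct closed balls of radius
`0`, then `X` contains a closed ball of strictly negative radius. -/
theorem swiss_cheese_contains_negative_ball {K : Type*} [Field K] {Γ : Type*}
    [AddCommGroup Γ] [LinearOrder Γ] [IsOrderedAddMonoid Γ] (v : AddValuation K (WithTop Γ))
    (hdense : ∀ α β : Γ, α < β → ∃ γ : Γ, α < γ ∧ γ < β)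
    (s : ℕ) (b : Set K) (hb : IsBall v b) (bi : Fin s → Set K)
    (hbi : ∀ i, IsBall v (bi i)) (X : Set K) (hX : X = b \ ⋃ i, bi i)
    (hinf : {S : Set K | (∃ c : K, S = cball v 0 c) ∧ (S ∩ X).Nonempty}.Infinite) :
    ∃ γ : Γ, γ < 0 ∧ ∃ a : K, cball v γ a ⊆ X := by
  have : DenselyOrdered Γ := ⟨hdense⟩
  choose ρ e he using hbi
  subst hX
  obtain ⟨_, ⟨⟨⟨_, rfl⟩, c, hc, hcX⟩, hcBad⟩, _, ⟨⟨⟨_, rfl⟩, d, hd, hdX⟩, -⟩, hne⟩ :=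
    (hinf.sdiff (Set.finite_range fun i => cball v 0 (e i))).nontrivial
  rw [← cball_eq_of_mem v hc] at hne hcBad
  rw [← cball_eq_of_mem v hd] at hne
  have hdc : v (d - c) < (0 : Γ) := not_le.mp fun h => hne (cball_eq_of_mem v h).symm
  have hec : ∀ i, v (e i - c) < (0 : Γ) := fun i =>
    not_le.mp fun h => hcBad ⟨i, cball_eq_of_mem v h⟩
  obtain ⟨γ, hγ, hlt⟩ := ((Set.finite_range e).insert d).exists_coe_lt_of_forall_lt
    (Set.insert_nonempty _ _) (fun p => v (p - c))
    (by rintro p (rfl | ⟨i, rfl⟩); exacts [hdc, hec i])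
  exact ⟨γ, hγ, c, cball_subset_sdiff_iUnion v hb he hcX hdX.1 (hlt d (Set.mem_insert _ _)).le
    fun i => hlt (e i) (Set.mem_insert_of_mem _ ⟨i, rfl⟩)⟩
end
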